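/- Let j ≥ 2 and f ∈ C²[0,1] with f'(x) ≥ 0 and x f''(x) − (j−1) f'(x) ≥ 0 for all x ∈ [0,1]. Then f ≤ B_{n,j} f ≤ B_n f pointwise on [0,1] for every n ≥ j. -/

import Mathlib

/-!
Write `f t = g (t ^ j)` with `g y = f (y ^ (1 / j))`. The condition `x f'' - (j - 1) f' ≥ 0` is,
up to a positive factor, `g'' ≥ 0`, so `g` is convex on `[0, 1]`. The `j`-th powers of the AKR
nodes are the ratios of falling factorials `k^(j) / n^(j)`, which the Bernstein weights average
to `x ^ j`; Jensen's inequality for `g` gives `f x = g (x ^ j) ≤ B_{n,j} f x`. Since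
`t_{n,k}^j ≤ k / n` and `f` is nondecreasing, `B_{n,j} f ≤ B_n f`.
-/

open Set Finset

/-- Bernstein basis polynomial `p_{n,k}(x) = C(n,k) x^k (1-x)^{n-k}`. -/
noncomputable def bp (n k : ℕ) (x : ℝ) : ℝ :=
  (n.choose k : ℝ) * x ^ k * (1 - x) ^ (n - k)

/-- AKR node `t_{n,k}^j = (k(k-1)⋯(k-j+1)/(n(n-1)⋯(n-j+1)))^{1/j}`. -/
noncomputable def akrNode (n j k : ℕ) : ℝ :=
  ((∏ i ∈ Finset.range j, ((k : ℝ) - i)) / (∏ i ∈ Finset.range j, ((n : ℝ) - i))) ^ ((j : ℝ)⁻¹)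

/-- Classical Bernstein operator. -/
noncomputable def bern (n : ℕ) (f : ℝ → ℝ) (x : ℝ) : ℝ :=
  ∑ k ∈ Finset.range (n + 1), f ((k : ℝ) / n) * bp n k x

/-- Aldaz–Kounchev–Render operator. -/
noncomputable def akr (n j : ℕ) (f : ℝ → ℝ) (x : ℝ) : ℝ :=
  ∑ k ∈ Finset.range (n + 1), f (akrNode n j k) * bp n k x

/-- Bivariate tensor-product Bernstein operator. -/
noncomputable def bern2 (n m : ℕ) (f : ℝ → ℝ → ℝ) (x y : ℝ) : ℝ :=
  ∑ i ∈ Finset.range (n + 1), ∑ k ∈ Finset.range (m + 1),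
    f ((i : ℝ) / n) ((k : ℝ) / m) * bp n i x * bp m k y

/-- Bivariate tensor-product AKR operator. -/
noncomputable def akr2 (n m j : ℕ) (f : ℝ → ℝ → ℝ) (x y : ℝ) : ℝ :=
  ∑ i ∈ Finset.range (n + 1), ∑ k ∈ Finset.range (m + 1),
    f (akrNode n j i) (akrNode m j k) * bp n i x * bp m k y

lemma bp_eq_eval (n k : ℕ) (x : ℝ) : bp n k x = (bernsteinPolynomial ℝ n k).eval x := by
  simp [bp, bernsteinPolynomial]

lemma sum_bp (n : ℕ) (x : ℝ) : ∑ k ∈ range (n + 1), bp n k x = 1 := by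
  simp_rw [bp_eq_eval, ← Polynomial.eval_finsetSum, bernsteinPolynomial.sum, Polynomial.eval_one]

lemma bp_nonneg (n k : ℕ) {x : ℝ} (hx : x ∈ Icc (0 : ℝ) 1) : 0 ≤ bp n k x := by
  have : 0 ≤ 1 - x := sub_nonneg.2 hx.2
  have := hx.1
  unfold bp
  positivity

lemma Nat.descFactorial_mul_choose {j k : ℕ} (hjk : j ≤ k) (n : ℕ) :
    k.descFactorial j * n.choose k = n.descFactorial j * (n - j).choose (k - j) := by
  simp only [Nat.descFactorial_eq_factorial_mul_choose, mul_assoc, mul_comm (k.choose j),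
    Nat.choose_mul hjk]

lemma sum_descFactorial_mul_bp (n j : ℕ) (x : ℝ) :
    ∑ k ∈ range (n + 1), (k.descFactorial j : ℝ) * bp n k x = n.descFactorial j * x ^ j := by
  rcases lt_or_ge n j with hnj | hjn
  · rw [Nat.descFactorial_eq_zero_iff_lt.2 hnj, Nat.cast_zero, zero_mul]
    refine sum_eq_zero fun k hk => ?_
    rw [Nat.descFactorial_eq_zero_iff_lt.2 (by grind), Nat.cast_zero, zero_mul]
  have hsplit : n + 1 = j + (n - j + 1) := by omega
  rw [hsplit, sum_range_add, sum_eq_zero fun k hk => by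
    rw [Nat.descFactorial_eq_zero_iff_lt.2 (mem_range.1 hk), Nat.cast_zero, zero_mul], zero_add,
    ← mul_one (_ * x ^ j), ← sum_bp (n - j) x, mul_sum]
  refine sum_congr rfl fun m hm => ?_
  have hmn : n - (j + m) = n - j - m := by omega
  have hkey : ((j + m).descFactorial j : ℝ) * n.choose (j + m)
      = n.descFactorial j * (n - j).choose m := by
    exact_mod_cast Nat.add_sub_cancel_left j m ▸ Nat.descFactorial_mul_choose (j.le_add_right m) n
  simp only [bp, hmn, pow_add]
  linear_combination x ^ j * x ^ m * (1 - x) ^ (n - j - m) * hkey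

lemma prod_range_natCast_sub (k j : ℕ) :
    ∏ i ∈ range j, ((k : ℝ) - i) = k.descFactorial j := by
  rw [← descPochhammer_eval_eq_prod_range, descPochhammer_eval_eq_descFactorial]

lemma akrNode_eq (n j k : ℕ) :
    akrNode n j k = ((k.descFactorial j : ℝ) / n.descFactorial j) ^ (j : ℝ)⁻¹ := by
  rw [akrNode, prod_range_natCast_sub, prod_range_natCast_sub]

lemma Nat.pow_mul_descFactorial_le {k n : ℕ} (hkn : k ≤ n) (j : ℕ) :
    n ^ j * k.descFactorial j ≤ k ^ j * n.descFactorial j := by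
  induction j with
  | zero => simp
  | succ j ih =>
    have hstep : n * (k - j) ≤ k * (n - j) := by
      rw [Nat.mul_sub, Nat.mul_sub, Nat.mul_comm n k]
      exact Nat.sub_le_sub_left (Nat.mul_le_mul_right j hkn) _
    calc n ^ (j + 1) * k.descFactorial (j + 1)
        = n * (k - j) * (n ^ j * k.descFactorial j) := by
          rw [Nat.descFactorial_succ]; ring
      _ ≤ k * (n - j) * (k ^ j * n.descFactorial j) := Nat.mul_le_mul hstep ih
      _ = k ^ (j + 1) * n.descFactorial (j + 1) := by
          rw [Nat.descFactorial_succ]; ring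

lemma descFactorial_div_descFactorial_le {k n : ℕ} (hn : 0 < n) (hkn : k ≤ n) (j : ℕ) :
    (k.descFactorial j : ℝ) / n.descFactorial j ≤ ((k : ℝ) / n) ^ j := by
  refine div_le_of_le_mul₀ (by positivity) (by positivity) ?_
  rw [div_pow, div_mul_eq_mul_div, le_div_iff₀ (by positivity), mul_comm]
  exact_mod_cast Nat.pow_mul_descFactorial_le hkn j

lemma descFactorial_div_descFactorial_mem_Icc {k n : ℕ} (hn : 0 < n) (hkn : k ≤ n) (j : ℕ) :
    (k.descFactorial j : ℝ) / n.descFactorial j ∈ Icc (0 : ℝ) 1 := by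
  refine ⟨by positivity, (descFactorial_div_descFactorial_le hn hkn j).trans ?_⟩
  exact pow_le_one₀ (by positivity) (div_le_one_of_le₀ (by exact_mod_cast hkn) (by positivity))

lemma akrNode_nonneg (n j k : ℕ) : 0 ≤ akrNode n j k := by
  rw [akrNode_eq]
  positivity

lemma akrNode_le_div {n j k : ℕ} (hj : j ≠ 0) (hn : 0 < n) (hkn : k ≤ n) :
    akrNode n j k ≤ k / n :=
  calc akrNode n j k ≤ (((k : ℝ) / n) ^ j) ^ (j : ℝ)⁻¹ := by
        rw [akrNode_eq]
        exact Real.rpow_le_rpow (by positivity) (descFactorial_div_descFactorial_le hn hkn j)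
          (by positivity)
    _ = k / n := Real.pow_rpow_inv_natCast (by positivity) hj

lemma akr_le_bern {n j : ℕ} (hj : j ≠ 0) (hn : 0 < n) {f : ℝ → ℝ}
    (hf : MonotoneOn f (Icc 0 1)) {x : ℝ} (hx : x ∈ Icc (0 : ℝ) 1) :
    akr n j f x ≤ bern n f x := by
  refine sum_le_sum fun k hk => mul_le_mul_of_nonneg_right ?_ (bp_nonneg n k hx)
  have hkn : k ≤ n := Nat.lt_succ_iff.1 (mem_range.1 hk)
  have hdiv : (k : ℝ) / n ≤ 1 := div_le_one_of_le₀ (by exact_mod_cast hkn) (by positivity)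
  exact hf ⟨akrNode_nonneg n j k, (akrNode_le_div hj hn hkn).trans hdiv⟩ ⟨by positivity, hdiv⟩
    (akrNode_le_div hj hn hkn)

lemma le_akr_of_convexOn {n j : ℕ} (hj : j ≠ 0) (hjn : j ≤ n) {f : ℝ → ℝ}
    (hg : ConvexOn ℝ (Icc 0 1) fun y => f (y ^ (j : ℝ)⁻¹)) {x : ℝ} (hx : x ∈ Icc (0 : ℝ) 1) :
    f x ≤ akr n j f x := by
  have hn : 0 < n := by omega
  have hdF : (n.descFactorial j : ℝ) ≠ 0 := by exact_mod_cast (Nat.descFactorial_pos.2 hjn).ne'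
  have hbary : ∑ k ∈ range (n + 1), bp n k x • ((k.descFactorial j : ℝ) / n.descFactorial j)
      = x ^ j := by
    simp_rw [smul_eq_mul, mul_div_assoc', ← sum_div, mul_comm (bp n _ x),
      sum_descFactorial_mul_bp, mul_div_cancel_left₀ _ hdF]
  have hjensen := hg.map_sum_le (fun k _ => bp_nonneg n k hx) (sum_bp n x)
    fun k hk => descFactorial_div_descFactorial_mem_Icc hn (Nat.lt_succ_iff.1 (mem_range.1 hk)) j
  rw [hbary, Real.pow_rpow_inv_natCast hx.1 hj] at hjensen
  simpa only [akr, akrNode_eq, smul_eq_mul, mul_comm (bp n _ x)] using hjensen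

/-- The second derivative of `y ↦ f (y ^ p⁻¹)`, with `a = f' (y ^ p⁻¹)` and `b = f'' (y ^ p⁻¹)`,
factored so that the hypothesis on `f` appears. -/
lemma deriv2_comp_rpow_inv_eq {p y : ℝ} (hp : p ≠ 0) (hy : 0 < y) (a b : ℝ) :
    b * (p⁻¹ * y ^ (p⁻¹ - 1)) * (p⁻¹ * y ^ (p⁻¹ - 1)) + a * (p⁻¹ * ((p⁻¹ - 1) * y ^ (p⁻¹ - 1 - 1)))
      = (p⁻¹ * y ^ (p⁻¹ - 1)) ^ 2 / y ^ p⁻¹ * (y ^ p⁻¹ * b - (p - 1) * a) := by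
  have hsq : y ^ (p⁻¹ - 1 - 1) = (y ^ (p⁻¹ - 1)) ^ 2 / y ^ p⁻¹ := by
    rw [← Real.rpow_natCast, ← Real.rpow_mul hy.le, ← Real.rpow_sub hy]
    congr 1
    push_cast
    ring
  have hypos : 0 < y ^ p⁻¹ := Real.rpow_pos_of_pos hy _
  rw [hsq]
  field_simp
  ring

lemma convexOn_comp_rpow_inv {p : ℝ} (hp : 0 < p) {f f' f'' : ℝ → ℝ}
    (hf : ContinuousOn f (Icc 0 1))
    (hf' : ∀ x ∈ Ioo (0 : ℝ) 1, HasDerivAt f (f' x) x)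
    (hf'' : ∀ x ∈ Ioo (0 : ℝ) 1, HasDerivAt f' (f'' x) x)
    (hfp : ∀ x ∈ Ioo (0 : ℝ) 1, 0 ≤ x * f'' x - (p - 1) * f' x) :
    ConvexOn ℝ (Icc 0 1) fun y => f (y ^ p⁻¹) := by
  have hc : 0 < p⁻¹ := inv_pos.2 hp
  have hmaps : MapsTo (· ^ p⁻¹) (Icc (0 : ℝ) 1) (Icc 0 1) := fun y hy =>
    ⟨Real.rpow_nonneg hy.1 _, Real.rpow_le_one hy.1 hy.2 hc.le⟩
  have hmem : ∀ y ∈ Ioo (0 : ℝ) 1, y ^ p⁻¹ ∈ Ioo (0 : ℝ) 1 := fun y hy =>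
    ⟨Real.rpow_pos_of_pos hy.1 _, Real.rpow_lt_one hy.1.le hy.2 hc⟩
  have hpow : ∀ y ∈ Ioo (0 : ℝ) 1, ∀ q : ℝ, HasDerivAt (· ^ q) (q * y ^ (q - 1)) y :=
    fun y hy q => Real.hasDerivAt_rpow_const (Or.inl hy.1.ne')
  refine convexOn_of_hasDerivWithinAt2_nonneg (convex_Icc 0 1)
    (hf.comp (Real.continuous_rpow_const hc.le).continuousOn hmaps)
    (f' := fun y => f' (y ^ p⁻¹) * (p⁻¹ * y ^ (p⁻¹ - 1)))
    (f'' := fun y => f'' (y ^ p⁻¹) * (p⁻¹ * y ^ (p⁻¹ - 1)) * (p⁻¹ * y ^ (p⁻¹ - 1))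
      + f' (y ^ p⁻¹) * (p⁻¹ * ((p⁻¹ - 1) * y ^ (p⁻¹ - 1 - 1)))) ?_ ?_ ?_ <;>
    rw [interior_Icc] <;> intro y hy
  · exact ((hf' _ (hmem y hy)).comp y (hpow y hy _)).hasDerivWithinAt
  · exact (((hf'' _ (hmem y hy)).comp y (hpow y hy _)).mul
      ((hpow y hy _).const_mul _)).hasDerivWithinAt
  · rw [deriv2_comp_rpow_inv_eq hp.ne' hy.1]
    exact mul_nonneg (div_nonneg (sq_nonneg _) (hmem y hy).1.le) (hfp _ (hmem y hy))

theorem stmt8_general (j n : ℕ) (hj : 2 ≤ j) (hn : j ≤ n) (f f' f'' : ℝ → ℝ)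
    (hf' : ∀ x ∈ Icc (0:ℝ) 1, HasDerivWithinAt f (f' x) (Icc 0 1) x)
    (hf'' : ∀ x ∈ Icc (0:ℝ) 1, HasDerivWithinAt f' (f'' x) (Icc 0 1) x)
    (hpos : ∀ x ∈ Icc (0:ℝ) 1, 0 ≤ f' x)
    (hconv : ∀ x ∈ Icc (0:ℝ) 1, 0 ≤ x * f'' x - ((j : ℝ) - 1) * f' x) :
    ∀ x ∈ Icc (0:ℝ) 1, f x ≤ akr n j f x ∧ akr n j f x ≤ bern n f x := by
  intro x hx
  have hj0 : j ≠ 0 := by omega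
  have hinterior {g g' : ℝ → ℝ} (hg : ∀ x ∈ Icc (0:ℝ) 1, HasDerivWithinAt g (g' x) (Icc 0 1) x) :
      ∀ x ∈ Ioo (0:ℝ) 1, HasDerivAt g (g' x) x := fun x hx =>
    (hg x (Ioo_subset_Icc_self hx)).hasDerivAt (Icc_mem_nhds hx.1 hx.2)
  have hcont : ContinuousOn f (Icc 0 1) := fun x hx => (hf' x hx).continuousWithinAt
  have hmono : MonotoneOn f (Icc 0 1) :=
    monotoneOn_of_hasDerivWithinAt_nonneg (convex_Icc 0 1) hcont
      (fun x hx => (hf' x (interior_subset hx)).mono interior_subset)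
      (fun x hx => hpos x (interior_subset hx))
  have hconvex := convexOn_comp_rpow_inv (p := j) (by positivity) hcont (hinterior hf')
    (hinterior hf'') (fun x hx => hconv x (Ioo_subset_Icc_self hx))
  exact ⟨le_akr_of_convexOn hj0 hn hconvex hx, akr_le_bern hj0 (by omega) hmono hx⟩

theorem stmt8 (j n : ℕ) (hj : 2 ≤ j) (hn : j ≤ n) (f f' f'' : ℝ → ℝ)
    (hf' : ∀ x ∈ Icc (0:ℝ) 1, HasDerivWithinAt f (f' x) (Icc 0 1) x)
    (hf'' : ∀ x ∈ Icc (0:ℝ) 1, HasDerivWithinAt f' (f'' x) (Icc 0 1) x)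
    (hc : ContinuousOn f'' (Icc 0 1))
    (hpos : ∀ x ∈ Icc (0:ℝ) 1, 0 ≤ f' x)
    (hconv : ∀ x ∈ Icc (0:ℝ) 1, 0 ≤ x * f'' x - ((j : ℝ) - 1) * f' x) :
    ∀ x ∈ Icc (0:ℝ) 1, f x ≤ akr n j f x ∧ akr n j f x ≤ bern n f x :=
  stmt8_general j n hj hn f f' f'' hf' hf'' hpos hconv
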